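/- arXiv:1311.1642 — 2 statements merged into one kernel-verified Lean document; each statement's English description precedes it below -/
import Mathlib

section
/- Fix 1 ≤ k ≤ d and x̂ ∈ ℝ^d with r_k(x̂) ≠ 0. Suppose x̂ ∈ D_κ with κ < α̃/√(α̃² + (β+2L)²), where α, β, L > 0, e ∈ ℝ^n, 1 ≤ p < ∞, and 0 < α̃ ≤ α − 2‖e‖_{ℓ_p}/r_k(x̂). Then for every j = 1,…,k: α r_j(x̂) > 2‖e‖_{ℓ_p} + 2L‖x̂ − x̂_{{k}}‖₂ + β‖x̂_{{j}} − x̂_{{k}}‖₂. -/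
/-!
With `q = κ²` and `T = ∑_{m > j} r_m(x̂)²`, both `‖x̂ - x̂_{k}‖²` and `‖x̂_{j} - x̂_{k}‖²` are at most `T`,
and the decay condition `r_{m+1}² ≤ q r_m²` telescopes to `T ≤ q (r_j² + T)`, i.e.
`(1 - q) T ≤ q r_j²`. The condition on `κ` reads `q (α̃² + (β + 2L)²) < α̃²`, which turns this into
`(β + 2L) √T < α̃ r_j`. The noise term is absorbed by `2‖e‖_p ≤ (α - α̃) r_k ≤ (α - α̃) r_j`.
-/

noncomputable section
open scoped BigOperators

/-- Best `j`-sparse approximation of `x`, keeping the `j` largest-in-magnitude entries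
(as given by the sorting permutation `σ`). -/
def trunc {d : ℕ} (σ : Equiv.Perm (Fin d)) (j : ℕ) (x : EuclideanSpace ℝ (Fin d)) :
    EuclideanSpace ℝ (Fin d) :=
  WithLp.toLp 2 (fun i => if (σ.symm i : ℕ) < j then x i else 0)

/-- The `ℓ_p` norm of a vector in `ℝ^n`. -/
def lpNorm {n : ℕ} (p : ℝ) (e : Fin n → ℝ) : ℝ :=
  (∑ i, |e i| ^ p) ^ (1 / p)

open Finset

lemma lpNorm_nonneg {n : ℕ} (p : ℝ) (e : Fin n → ℝ) : 0 ≤ lpNorm p e := by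
  unfold lpNorm
  positivity

lemma one_sub_mul_sum_range_le {a : ℕ → ℝ} {q : ℝ} (hq : 0 ≤ q) (ha : ∀ m, 0 ≤ a m)
    (hdecay : ∀ m, a (m + 1) ≤ q * a m) (i N : ℕ) :
    (1 - q) * ∑ m ∈ range N, a (i + 1 + m) ≤ q * a i := by
  have hshift : ∑ m ∈ range N, a (i + 1 + m) ≤ q * ∑ m ∈ range N, a (i + m) := by
    rw [mul_sum]
    exact sum_le_sum fun m _ => by simpa [add_right_comm] using hdecay (i + m)
  have hextend : ∑ m ∈ range N, a (i + m) ≤ ∑ m ∈ range N, a (i + 1 + m) + a i := by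
    have hsucc := sum_range_succ (fun m => a (i + m)) N
    have hsucc' := sum_range_succ' (fun m => a (i + m)) N
    simp only [add_zero, ← add_assoc, show ∀ m, i + m + 1 = i + 1 + m from fun m => by omega]
      at hsucc'
    linarith [ha (i + N)]
  nlinarith

lemma one_sub_mul_sum_Ico_le {a : ℕ → ℝ} {q : ℝ} (hq : 0 ≤ q) (ha : ∀ m, 0 ≤ a m)
    (hdecay : ∀ m, a (m + 1) ≤ q * a m) (i N : ℕ) :
    (1 - q) * ∑ m ∈ Ico (i + 1) N, a m ≤ q * a i := by
  rw [sum_Ico_eq_sum_range]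
  exact one_sub_mul_sum_range_le hq ha hdecay i _

lemma Fin.sum_ite_le_eq_sum_Ico {M : Type*} [AddCommMonoid M] (d j : ℕ) (f : ℕ → M) :
    ∑ m : Fin d, (if j ≤ (m : ℕ) then f m else 0) = ∑ m ∈ Ico j d, f m := by
  rw [Fin.sum_univ_eq_sum_range (fun m => if j ≤ m then f m else 0), ← sum_filter]
  congr 1
  ext m
  simp only [mem_filter, mem_range, mem_Ico]
  omega

lemma sq_mul_add_sq_lt_of_lt_div_sqrt {κ a c : ℝ} (hκ : 0 ≤ κ) (ha : 0 < a)
    (h : κ < a / √(a ^ 2 + c ^ 2)) : κ ^ 2 * (a ^ 2 + c ^ 2) < a ^ 2 := by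
  have hpos : 0 < √(a ^ 2 + c ^ 2) := Real.sqrt_pos.mpr (by positivity)
  have := pow_lt_pow_left₀ ((lt_div_iff₀ hpos).mp h) (by positivity) two_ne_zero
  rwa [mul_pow, Real.sq_sqrt (by positivity)] at this

lemma mul_sqrt_lt_of_one_sub_mul_le {q T a c r : ℝ} (ha : 0 < a) (hr : 0 < r)
    (hT0 : 0 ≤ T) (hT : (1 - q) * T ≤ q * r ^ 2) (hq : q * (a ^ 2 + c ^ 2) < a ^ 2) :
    c * √T < a * r := by
  have hq1 : q < 1 := by nlinarith
  have : c ^ 2 * T < a ^ 2 * r ^ 2 := by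
    have h1 : c ^ 2 * ((1 - q) * T) ≤ c ^ 2 * (q * r ^ 2) := by gcongr
    have h2 : q * c ^ 2 * r ^ 2 < a ^ 2 * (1 - q) * r ^ 2 :=
      mul_lt_mul_of_pos_right (by linarith) (by positivity)
    have h3 : c ^ 2 * T * (1 - q) < a ^ 2 * r ^ 2 * (1 - q) := by linarith
    exact lt_of_mul_lt_mul_right h3 (by linarith)
  refine lt_of_pow_lt_pow_left₀ 2 (by positivity) ?_
  rwa [mul_pow, mul_pow, Real.sq_sqrt hT0]

section Sorted

variable {d : ℕ} (σ : Equiv.Perm (Fin d)) (x : EuclideanSpace ℝ (Fin d))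

lemma trunc_of_le {j : ℕ} (hj : d ≤ j) : trunc σ j x = x := by
  ext i
  simp [trunc, (σ.symm i).2.trans_le hj]

/-- `r_{m+1}(x)²` when `σ` sorts `x`, and `0` for `m ≥ d`. -/
def sortedSq (m : ℕ) : ℝ :=
  if h : m < d then x (σ ⟨m, h⟩) ^ 2 else 0

lemma sortedSq_nonneg (m : ℕ) : 0 ≤ sortedSq σ x m := by
  unfold sortedSq
  split_ifs <;> positivity

lemma sortedSq_of_lt {m : ℕ} (h : m < d) : sortedSq σ x m = |x (σ ⟨m, h⟩)| ^ 2 := by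
  rw [sortedSq, dif_pos h, sq_abs]

variable {σ x}

lemma sortedSq_succ_le {κ : ℝ}
    (hdecay : ∀ i : Fin d, ∀ h : (i : ℕ) + 1 < d, |x (σ ⟨(i : ℕ) + 1, h⟩)| ≤ κ * |x (σ i)|)
    (m : ℕ) : sortedSq σ x (m + 1) ≤ κ ^ 2 * sortedSq σ x m := by
  by_cases h : m + 1 < d
  · rw [sortedSq_of_lt σ x h, sortedSq_of_lt σ x (Nat.lt_of_succ_lt h), ← mul_pow]
    exact pow_le_pow_left₀ (abs_nonneg _) (hdecay ⟨m, _⟩ h) 2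
  · rw [sortedSq, dif_neg h]
    exact mul_nonneg (sq_nonneg κ) (sortedSq_nonneg σ x m)

lemma norm_trunc_sub_trunc_sq_le {j k l : ℕ} (hjk : j ≤ k) (hjl : j ≤ l) :
    ‖trunc σ k x - trunc σ l x‖ ^ 2 ≤ ∑ m ∈ Ico j d, sortedSq σ x m := by
  rw [EuclideanSpace.real_norm_sq_eq, ← Equiv.sum_comp σ, ← Fin.sum_ite_le_eq_sum_Ico]
  refine sum_le_sum fun m _ => ?_
  simp only [sortedSq, m.2, dif_pos, PiLp.sub_apply, trunc, Equiv.symm_apply_apply]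
  split_ifs <;> first | omega | simp [sq_nonneg]

end Sorted

theorem rj_lower_bound_of_rapidly_decaying_general
    {d n : ℕ} (κ α β L α' : ℝ) (p : ℝ)
    (xh : EuclideanSpace ℝ (Fin d)) (e : Fin n → ℝ)
    (σ : Equiv.Perm (Fin d))
    (hsort : ∀ i j : Fin d, i ≤ j → |xh (σ j)| ≤ |xh (σ i)|)
    (hκ0 : 0 < κ)
    (hdecay : ∀ i : Fin d, ∀ h : (i : ℕ) + 1 < d, |xh (σ ⟨(i : ℕ) + 1, h⟩)| ≤ κ * |xh (σ i)|)
    (k : ℕ) (hk1d : k - 1 < d)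
    (hrk : xh (σ ⟨k - 1, hk1d⟩) ≠ 0)
    (hβ : 0 < β) (hL : 0 < L)
    (hα'0 : 0 < α') (hα' : α' ≤ α - 2 * lpNorm p e / |xh (σ ⟨k - 1, hk1d⟩)|)
    (hκ : κ < α' / Real.sqrt (α' ^ 2 + (β + 2 * L) ^ 2))
    (j : ℕ) (hj1 : 1 ≤ j) (hjk : j ≤ k) (hj1d : j - 1 < d) :
    α * |xh (σ ⟨j - 1, hj1d⟩)| >
      2 * lpNorm p e + 2 * L * ‖xh - trunc σ k xh‖ + β * ‖trunc σ j xh - trunc σ k xh‖ := by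
  set rj := |xh (σ ⟨j - 1, hj1d⟩)|
  set rk := |xh (σ ⟨k - 1, hk1d⟩)|
  have hrk_pos : 0 < rk := abs_pos.mpr hrk
  have hrk_le : rk ≤ rj := hsort _ _ (Fin.mk_le_mk.mpr (by omega))
  have hrj_pos : 0 < rj := hrk_pos.trans_le hrk_le
  have hnoise : α' * rj + 2 * lpNorm p e ≤ α * rj := by
    have hgap : 2 * lpNorm p e ≤ (α - α') * rk := by
      rwa [le_sub_comm, div_le_iff₀ hrk_pos] at hα'
    have hα'_le_α : 0 ≤ α - α' :=
      le_of_mul_le_mul_right (by linarith [lpNorm_nonneg p e] : 0 * rk ≤ (α - α') * rk) hrk_pos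
    nlinarith [mul_le_mul_of_nonneg_left hrk_le hα'_le_α]
  set T := ∑ m ∈ Ico j d, sortedSq σ xh m
  have htail : (1 - κ ^ 2) * T ≤ κ ^ 2 * rj ^ 2 := by
    have := one_sub_mul_sum_Ico_le (sq_nonneg κ) (sortedSq_nonneg σ xh) (sortedSq_succ_le hdecay)
      (j - 1) d
    rwa [Nat.sub_add_cancel hj1, sortedSq_of_lt σ xh hj1d] at this
  have hA : ‖xh - trunc σ k xh‖ ≤ √T := by
    have := norm_trunc_sub_trunc_sq_le (σ := σ) (x := xh) (k := d) (by omega) hjk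
    rw [trunc_of_le σ xh le_rfl] at this
    exact Real.le_sqrt_of_sq_le this
  have hB : ‖trunc σ j xh - trunc σ k xh‖ ≤ √T :=
    Real.le_sqrt_of_sq_le (norm_trunc_sub_trunc_sq_le le_rfl hjk)
  have hsignal : (β + 2 * L) * √T < α' * rj :=
    mul_sqrt_lt_of_one_sub_mul_le hα'0 hrj_pos (sum_nonneg fun m _ => sortedSq_nonneg σ xh m) htail
      (sq_mul_add_sq_lt_of_lt_div_sqrt hκ0.le hα'0 hκ)
  nlinarith [mul_le_mul_of_nonneg_left hA (by positivity : (0 : ℝ) ≤ 2 * L),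
    mul_le_mul_of_nonneg_left hB hβ.le]

/-- Lemma 3.4 of the paper: under the decay condition `x̂ ∈ 𝒟_κ` with
`κ < α̃/√(α̃² + (β+2L)²)` and `0 < α̃ ≤ α − 2‖e‖_p/r_k(x̂)`, one has, for `j = 1,…,k`,
`α r_j(x̂) > 2‖e‖_p + 2L‖x̂ − x̂_{k}‖ + β‖x̂_{j} − x̂_{k}‖`.
Here `σ` sorts the entries of `x̂` nonincreasingly in absolute value, so that
`r_m(x̂) = |x̂ (σ (m-1))|` (1-based `m`). -/
theorem rj_lower_bound_of_rapidly_decaying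
    {d n : ℕ} (κ α β L α' : ℝ) (p : ℝ) (hp : 1 ≤ p)
    (xh : EuclideanSpace ℝ (Fin d)) (e : Fin n → ℝ)
    (σ : Equiv.Perm (Fin d))
    (hsort : ∀ i j : Fin d, i ≤ j → |xh (σ j)| ≤ |xh (σ i)|)
    (hκ0 : 0 < κ) (hκ1 : κ < 1)
    (hdecay : ∀ i : Fin d, ∀ h : (i : ℕ) + 1 < d, |xh (σ ⟨(i : ℕ) + 1, h⟩)| ≤ κ * |xh (σ i)|)
    (k : ℕ) (hk1 : 1 ≤ k) (hkd : k ≤ d) (hk1d : k - 1 < d)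
    (hrk : xh (σ ⟨k - 1, hk1d⟩) ≠ 0)
    (hα : 0 < α) (hβ : 0 < β) (hL : 0 < L)
    (hα'0 : 0 < α') (hα' : α' ≤ α - 2 * lpNorm p e / |xh (σ ⟨k - 1, hk1d⟩)|)
    (hκ : κ < α' / Real.sqrt (α' ^ 2 + (β + 2 * L) ^ 2))
    (j : ℕ) (hj1 : 1 ≤ j) (hjk : j ≤ k) (hj1d : j - 1 < d) :
    α * |xh (σ ⟨j - 1, hj1d⟩)| >
      2 * lpNorm p e + 2 * L * ‖xh - trunc σ k xh‖ + β * ‖trunc σ j xh - trunc σ k xh‖ :=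
  rj_lower_bound_of_rapidly_decaying_general κ α β L α' p xh e σ hsort hκ0 hdecay k hk1d hrk hβ hL
    hα'0 hα' hκ j hj1 hjk hj1d
end
end

section
/- Let F : ℝ^d → ℝ^{n×d}, b ∈ ℝ^n, α > 0, and define 𝒮_α(x) := argmin_{y ∈ ℝ^d} ‖F(x)y − b‖² + α‖y‖_{ℓ₁}. Assume: (i) ‖F(x)‖₂ ≤ c₁ for all x; (ii) for each x there is z_x with F(x)z_x = b and ‖z_x‖_{ℓ₁} ≤ c₂‖b‖; (iii) ‖F(x) − F(y)‖₂ ≤ c₃‖x − y‖ for all x, y; (iv) for all (4/α²)(c₁ + c₂ + c₁²c₂)²‖b‖²-sparse y and all x: (1−γ)‖y‖² ≤ ‖F(x)y‖² ≤ (1+γ)‖y‖²; (v) γ < 1 − (1 + 2c₁c₂)c₃‖b‖. Then 𝒮_α is a contraction with Lipschitz constant (2c₁c₂ + 1)c₃‖b‖/(1−γ) < 1 and satisfies ‖𝒮_α(x)‖ ≤ c₂‖b‖ for all x; consequently the fixed-point iteration x^{(j+1)} = 𝒮_α(x^{(j)}) converges from any initial point to a unique x_α satisfying x_α = argmin_y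 ‖F(x_α)y − b‖² + α‖y‖_{ℓ₁}. -/
noncomputable section
open scoped BigOperators
open Filter Topology

/-- The `ℓ₁` norm of a vector. -/
def l1Norm {d : ℕ} (x : EuclideanSpace ℝ (Fin d)) : ℝ := ∑ i, |x i|

/-- Number of nonzero entries of a vector. -/
def suppCard {d : ℕ} (x : EuclideanSpace ℝ (Fin d)) : ℕ :=
  (Finset.univ.filter fun i => x i ≠ 0).card

/-!
Write `u = 𝒮_α(x)`, `A = F(x)`. Minimality of `u` gives the first-order condition
`2⟪b - A u, A (w - u)⟫ ≤ α (‖w‖₁ - ‖u‖₁)` for every `w`. Testing it at `w = u - uᵢ eᵢ` shows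
`|(A*(b - A u))ᵢ| ≥ α/2` on the support of `u`, and `‖A*(b - A u)‖ ≤ c₁ ‖b‖`, so `u` has at most
`4 c₁² ‖b‖² / α²` nonzero entries; since (ii) forces `c₁ c₂ ≥ 1` when `b ≠ 0`, the difference
`𝒮_α(x) - 𝒮_α(y)` is sparse enough for the restricted isometry (iv). Adding the first-order
conditions at `x` and `y` (monotonicity of the subdifferential of `‖·‖₁`) and expanding yields
`(1 - γ) ‖w‖² ≤ ‖F(x) w‖² ≤ ‖F(x) - F(y)‖ ‖w‖ (1 + 2 c₁ c₂) ‖b‖` for `w = 𝒮_α(x) - 𝒮_α(y)`, where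
`‖𝒮_α(y)‖ ≤ ‖𝒮_α(y)‖₁ ≤ c₂ ‖b‖` by comparison with the feasible point of (ii). Banach's fixed
point theorem does the rest.
-/

open scoped RealInnerProductSpace
open Set (Ioc)

section L1Norm

variable {d : ℕ}

lemma l1Norm_nonneg (x : EuclideanSpace ℝ (Fin d)) : 0 ≤ l1Norm x :=
  Finset.sum_nonneg fun _ _ => abs_nonneg _

lemma norm_le_l1Norm (x : EuclideanSpace ℝ (Fin d)) : ‖x‖ ≤ l1Norm x := by
  conv_lhs => rw [← (EuclideanSpace.basisFun (Fin d) ℝ).sum_repr x]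
  refine (norm_sum_le _ _).trans_eq (Finset.sum_congr rfl fun i _ => ?_)
  simp [norm_smul]

lemma l1Norm_add_smul_sub_le (u w : EuclideanSpace ℝ (Fin d)) {t : ℝ} (ht₀ : 0 ≤ t)
    (ht₁ : t ≤ 1) : l1Norm (u + t • (w - u)) ≤ l1Norm u + t * (l1Norm w - l1Norm u) := by
  simp only [l1Norm, mul_sub, Finset.mul_sum, ← Finset.sum_sub_distrib, ← Finset.sum_add_distrib]
  refine Finset.sum_le_sum fun i _ => ?_
  calc |(u + t • (w - u)) i| = |(1 - t) * u i + t * w i| := by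
        simp only [PiLp.add_apply, PiLp.smul_apply, PiLp.sub_apply, smul_eq_mul]; ring_nf
    _ ≤ |(1 - t) * u i| + |t * w i| := abs_add_le _ _
    _ = |u i| + (t * |w i| - t * |u i|) := by
        rw [abs_mul, abs_mul, abs_of_nonneg ht₀, abs_of_nonneg (sub_nonneg.2 ht₁)]; ring

lemma l1Norm_sub_single (u : EuclideanSpace ℝ (Fin d)) (i : Fin d) :
    l1Norm (u - EuclideanSpace.single i (u i)) = l1Norm u - |u i| := by
  have h : ∀ j, |(u - EuclideanSpace.single i (u i)) j| = |u j| - if j = i then |u i| else 0 := by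
    intro j
    by_cases hj : j = i <;> simp [hj]
  simp only [l1Norm, h, Finset.sum_sub_distrib, Finset.sum_ite_eq', Finset.mem_univ, if_true]

lemma suppCard_sub_le (u v : EuclideanSpace ℝ (Fin d)) :
    suppCard (u - v) ≤ suppCard u + suppCard v := by
  refine (Finset.card_le_card fun i hi => ?_).trans (Finset.card_union_le _ _)
  simp only [Finset.mem_filter, Finset.mem_union, Finset.mem_univ, true_and] at hi ⊢
  by_contra! h
  exact hi (by simp [h.1, h.2])

lemma suppCard_mul_sq_le_norm_sq {u g : EuclideanSpace ℝ (Fin d)} {β : ℝ} (hβ : 0 ≤ β)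
    (h : ∀ i, u i ≠ 0 → β ≤ |g i|) : (suppCard u : ℝ) * β ^ 2 ≤ ‖g‖ ^ 2 := by
  rw [EuclideanSpace.norm_sq_eq, suppCard, ← nsmul_eq_mul, ← Finset.sum_const]
  calc ∑ _i ∈ Finset.univ.filter (fun i => u i ≠ 0), β ^ 2
      ≤ ∑ i ∈ Finset.univ.filter (fun i => u i ≠ 0), ‖g i‖ ^ 2 :=
        Finset.sum_le_sum fun i hi => by
          rw [Real.norm_eq_abs]
          exact pow_le_pow_left₀ hβ (h i (Finset.mem_filter.1 hi).2) 2
    _ ≤ ∑ i, ‖g i‖ ^ 2 :=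
        Finset.sum_le_sum_of_subset_of_nonneg (Finset.filter_subset _ _) fun _ _ _ => by positivity

end L1Norm

lemma nonneg_of_forall_nonneg_add_mul {a B : ℝ} (h : ∀ t ∈ Ioc (0 : ℝ) 1, 0 ≤ a + B * t) :
    0 ≤ a := by
  have hlim : Tendsto (fun t => a + B * t) (𝓝[>] 0) (𝓝 a) := by
    have hcont : Continuous fun t : ℝ => a + B * t := by fun_prop
    simpa using (hcont.tendsto 0).mono_left nhdsWithin_le_nhds
  exact ge_of_tendsto hlim (eventually_of_mem (Ioc_mem_nhdsGT one_pos) h)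

lemma norm_sq_apply_sub_le_of_inner_le {E G : Type*} [NormedAddCommGroup E] [InnerProductSpace ℝ E]
    [NormedAddCommGroup G] [InnerProductSpace ℝ G] (A B : E →L[ℝ] G) (b : G) (u v : E)
    (h : ⟪b - B v, B (u - v)⟫ ≤ ⟪b - A u, A (u - v)⟫) :
    ‖A (u - v)‖ ^ 2 ≤ ‖A - B‖ * ‖u - v‖ * (‖b‖ + (‖A‖ + ‖B‖) * ‖v‖) := by
  set w := u - v
  have hid : ‖A w‖ ^ 2 + (⟪b - A u, A w⟫ - ⟪b - B v, B w⟫)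
      = ⟪b, (A - B) w⟫ - ⟪(A - B) v, A w⟫ - ⟪B v, (A - B) w⟫ := by
    have hu : A u = A w + A v := by rw [← map_add, sub_add_cancel]
    rw [hu]
    simp only [sub_apply, inner_sub_left, inner_sub_right, inner_add_left,
      real_inner_self_eq_norm_sq]
    ring
  calc ‖A w‖ ^ 2 ≤ ⟪b, (A - B) w⟫ - ⟪(A - B) v, A w⟫ - ⟪B v, (A - B) w⟫ := by linarith
    _ ≤ ‖b‖ * ‖(A - B) w‖ + ‖(A - B) v‖ * ‖A w‖ + ‖B v‖ * ‖(A - B) w‖ := by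
        linarith [real_inner_le_norm b ((A - B) w), neg_le_of_abs_le (abs_real_inner_le_norm
          ((A - B) v) (A w)), neg_le_of_abs_le (abs_real_inner_le_norm (B v) ((A - B) w))]
    _ ≤ ‖b‖ * (‖A - B‖ * ‖w‖) + ‖A - B‖ * ‖v‖ * (‖A‖ * ‖w‖) + ‖B‖ * ‖v‖ * (‖A - B‖ * ‖w‖) := by
        gcongr <;> exact ContinuousLinearMap.le_opNorm _ _
    _ = ‖A - B‖ * ‖w‖ * (‖b‖ + (‖A‖ + ‖B‖) * ‖v‖) := by ring

section Lasso

variable {d : ℕ} {G : Type*} [NormedAddCommGroup G] [InnerProductSpace ℝ G]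

def IsLassoMinimizer (A : EuclideanSpace ℝ (Fin d) →L[ℝ] G) (b : G) (α : ℝ)
    (u : EuclideanSpace ℝ (Fin d)) : Prop :=
  ∀ y, ‖A u - b‖ ^ 2 + α * l1Norm u ≤ ‖A y - b‖ ^ 2 + α * l1Norm y

namespace IsLassoMinimizer

variable {A B : EuclideanSpace ℝ (Fin d) →L[ℝ] G} {b : G} {α : ℝ} {u v : EuclideanSpace ℝ (Fin d)}

theorem l1Norm_le (hα : 0 < α) (hu : IsLassoMinimizer A b α u) {z : EuclideanSpace ℝ (Fin d)}
    (hz : A z = b) : l1Norm u ≤ l1Norm z := by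
  have h := hu z
  rw [hz, sub_self, norm_zero] at h
  exact le_of_mul_le_mul_left (by linarith [sq_nonneg ‖A u - b‖]) hα

theorem norm_apply_sub_le (hα : 0 ≤ α) (hu : IsLassoMinimizer A b α u) : ‖A u - b‖ ≤ ‖b‖ := by
  have h := hu 0
  rw [map_zero, zero_sub, norm_neg, show l1Norm (0 : EuclideanSpace ℝ (Fin d)) = 0 by
    simp [l1Norm]] at h
  exact pow_le_pow_iff_left₀ (norm_nonneg _) (norm_nonneg _) two_ne_zero |>.1 <| by
    nlinarith [mul_nonneg hα (l1Norm_nonneg u)]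

/-- First-order optimality: `2 A*(b - A u)` is a subgradient of `α ‖·‖₁` at `u`. -/
theorem two_inner_le (hα : 0 ≤ α) (hu : IsLassoMinimizer A b α u) (w : EuclideanSpace ℝ (Fin d)) :
    2 * ⟪b - A u, A (w - u)⟫ ≤ α * (l1Norm w - l1Norm u) := by
  set h := w - u
  suffices 0 ≤ (α * (l1Norm w - l1Norm u) - 2 * ⟪b - A u, A h⟫) by linarith
  refine nonneg_of_forall_nonneg_add_mul (B := ‖A h‖ ^ 2) fun t ⟨ht₀, ht₁⟩ => ?_
  have hexp : ‖A (u + t • h) - b‖ ^ 2 = ‖A u - b‖ ^ 2 - 2 * t * ⟪b - A u, A h⟫ + t ^ 2 * ‖A h‖ ^ 2 := by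
    rw [map_add, map_smul, add_sub_right_comm, norm_add_sq_real, inner_smul_right, norm_smul,
      ← neg_sub b, inner_neg_left, Real.norm_eq_abs, mul_pow, sq_abs]
    ring
  have hmin := hu (u + t • h)
  rw [hexp] at hmin
  have hl1 := mul_le_mul_of_nonneg_left (l1Norm_add_smul_sub_le u w ht₀.le ht₁) hα
  refine nonneg_of_mul_nonneg_right (a := t) ?_ ht₀
  nlinarith

theorem inner_le_inner (hα : 0 ≤ α) (hu : IsLassoMinimizer A b α u)
    (hv : IsLassoMinimizer B b α v) : ⟪b - B v, B (u - v)⟫ ≤ ⟪b - A u, A (u - v)⟫ := by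
  have h₁ := hu.two_inner_le hα v
  have h₂ := hv.two_inner_le hα u
  rw [← neg_sub u v, map_neg, inner_neg_right] at h₁
  linarith

theorem mul_norm_sub_le (hα : 0 ≤ α) (hu : IsLassoMinimizer A b α u)
    (hv : IsLassoMinimizer B b α v) {m : ℝ} (hm : m * ‖u - v‖ ^ 2 ≤ ‖A (u - v)‖ ^ 2) :
    m * ‖u - v‖ ≤ ‖A - B‖ * (‖b‖ + (‖A‖ + ‖B‖) * ‖v‖) := by
  have h := hm.trans (norm_sq_apply_sub_le_of_inner_le A B b u v (hu.inner_le_inner hα hv))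
  rcases (norm_nonneg (u - v)).eq_or_lt with h0 | hpos
  · rw [← h0, mul_zero]
    positivity
  · nlinarith

section Complete

variable [CompleteSpace G]

theorem le_two_mul_abs_adjoint (hα : 0 ≤ α) (hu : IsLassoMinimizer A b α u) {i : Fin d}
    (hi : u i ≠ 0) : α ≤ 2 * |ContinuousLinearMap.adjoint A (b - A u) i| := by
  have h := hu.two_inner_le hα (u - EuclideanSpace.single i (u i))
  rw [sub_sub_cancel_left, l1Norm_sub_single, map_neg, inner_neg_right,
    ← ContinuousLinearMap.adjoint_inner_left, EuclideanSpace.inner_single_right] at h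
  simp only [conj_trivial] at h
  have hui := abs_pos.2 hi
  have : α * |u i| ≤ 2 * |ContinuousLinearMap.adjoint A (b - A u) i| * |u i| := by
    nlinarith [le_abs_self (u i * ContinuousLinearMap.adjoint A (b - A u) i),
      abs_mul (u i) (ContinuousLinearMap.adjoint A (b - A u) i)]
  exact le_of_mul_le_mul_right this hui

theorem suppCard_le (hα : 0 < α) (hu : IsLassoMinimizer A b α u) :
    (suppCard u : ℝ) ≤ 4 / α ^ 2 * ‖A‖ ^ 2 * ‖b‖ ^ 2 := by
  have hg : ‖ContinuousLinearMap.adjoint A (b - A u)‖ ≤ ‖A‖ * ‖b‖ := by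
    refine ((ContinuousLinearMap.adjoint A).le_opNorm _).trans ?_
    rw [LinearIsometryEquiv.norm_map, norm_sub_rev]
    gcongr
    exact hu.norm_apply_sub_le hα.le
  have hcard := suppCard_mul_sq_le_norm_sq (g := ContinuousLinearMap.adjoint A (b - A u))
    (half_pos hα).le fun i hi => by linarith [hu.le_two_mul_abs_adjoint hα.le hi]
  calc (suppCard u : ℝ) = 4 / α ^ 2 * (suppCard u * (α / 2) ^ 2) := by field_simp; ring
    _ ≤ 4 / α ^ 2 * (‖A‖ * ‖b‖) ^ 2 := by gcongr; exact hcard.trans (by gcongr)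
    _ = 4 / α ^ 2 * ‖A‖ ^ 2 * ‖b‖ ^ 2 := by ring

theorem suppCard_sub_le (hα : 0 < α) (hu : IsLassoMinimizer A b α u)
    (hv : IsLassoMinimizer B b α v) {c : ℝ} (hA : ‖A‖ ≤ c) (hB : ‖B‖ ≤ c) :
    (suppCard (u - v) : ℝ) ≤ 4 / α ^ 2 * (2 * c ^ 2) * ‖b‖ ^ 2 :=
  calc (suppCard (u - v) : ℝ) ≤ suppCard u + suppCard v := by exact_mod_cast _root_.suppCard_sub_le u v
    _ ≤ 4 / α ^ 2 * ‖A‖ ^ 2 * ‖b‖ ^ 2 + 4 / α ^ 2 * ‖B‖ ^ 2 * ‖b‖ ^ 2 :=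
      add_le_add (hu.suppCard_le hα) (hv.suppCard_le hα)
    _ ≤ 4 / α ^ 2 * c ^ 2 * ‖b‖ ^ 2 + 4 / α ^ 2 * c ^ 2 * ‖b‖ ^ 2 := by gcongr
    _ = 4 / α ^ 2 * (2 * c ^ 2) * ‖b‖ ^ 2 := by ring

end Complete

end IsLassoMinimizer

end Lasso

theorem soft_thresholding_contraction_general
    {d n : ℕ}
    (F : EuclideanSpace ℝ (Fin d) → (EuclideanSpace ℝ (Fin d) →L[ℝ] EuclideanSpace ℝ (Fin n)))
    (b : EuclideanSpace ℝ (Fin n)) (α : ℝ) (hα : 0 < α)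
    (c₁ c₂ c₃ γ : ℝ) (hc₁ : 0 < c₁) (hc₂ : 0 < c₂) (hc₃ : 0 < c₃)
    -- 𝒮_α, a choice of minimizer
    (S : EuclideanSpace ℝ (Fin d) → EuclideanSpace ℝ (Fin d))
    (hS : ∀ x y : EuclideanSpace ℝ (Fin d),
      ‖F x (S x) - b‖ ^ 2 + α * l1Norm (S x) ≤ ‖F x y - b‖ ^ 2 + α * l1Norm y)
    -- (i) uniform bound on the operator norms
    (h1 : ∀ x, ‖F x‖ ≤ c₁)
    -- (ii) feasible points with controlled ℓ₁ norm
    (h2 : ∀ x, ∃ z : EuclideanSpace ℝ (Fin d), F x z = b ∧ l1Norm z ≤ c₂ * ‖b‖)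
    -- (iii) Lipschitz continuity of F in spectral norm
    (h3 : ∀ x y, ‖F x - F y‖ ≤ c₃ * ‖x - y‖)
    -- (iv) restricted isometry on sufficiently sparse vectors
    (h4 : ∀ x y : EuclideanSpace ℝ (Fin d),
      (suppCard y : ℝ) ≤ (4 / α ^ 2) * (c₁ + c₂ + c₁ ^ 2 * c₂) ^ 2 * ‖b‖ ^ 2 →
      (1 - γ) * ‖y‖ ^ 2 ≤ ‖F x y‖ ^ 2 ∧ ‖F x y‖ ^ 2 ≤ (1 + γ) * ‖y‖ ^ 2)
    -- (v) smallness condition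
    (h5 : γ < 1 - (1 + 2 * c₁ * c₂) * c₃ * ‖b‖) :
    (∀ x, ‖S x‖ ≤ c₂ * ‖b‖) ∧
    (∀ x y, ‖S x - S y‖ ≤ ((2 * c₁ * c₂ + 1) * c₃ * ‖b‖ / (1 - γ)) * ‖x - y‖) ∧
    (2 * c₁ * c₂ + 1) * c₃ * ‖b‖ / (1 - γ) < 1 ∧
    (∃! xα : EuclideanSpace ℝ (Fin d), S xα = xα) ∧
    (∃ xα : EuclideanSpace ℝ (Fin d), S xα = xα ∧
      (∀ x₀, Tendsto (fun j => S^[j] x₀) atTop (𝓝 xα)) ∧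
      (∀ y, ‖F xα xα - b‖ ^ 2 + α * l1Norm xα ≤ ‖F xα y - b‖ ^ 2 + α * l1Norm y)) := by
  have hmin : ∀ x, IsLassoMinimizer (F x) b α (S x) := hS
  have hbound : ∀ x, ‖S x‖ ≤ c₂ * ‖b‖ := fun x => by
    obtain ⟨z, hz, hz₁⟩ := h2 x
    exact (norm_le_l1Norm _).trans (((hmin x).l1Norm_le hα hz).trans hz₁)
  have hb : c₁ * ‖b‖ ≤ c₁ ^ 2 * c₂ * ‖b‖ := by
    obtain ⟨z, hz, hz₁⟩ := h2 0
    have : ‖b‖ ≤ c₁ * (c₂ * ‖b‖) :=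
      hz ▸ (F 0).le_of_opNorm_le (h1 0) z |>.trans (by gcongr; exact (norm_le_l1Norm z).trans hz₁)
    nlinarith
  have hsparse : ∀ x y, (suppCard (S x - S y) : ℝ) ≤
      4 / α ^ 2 * (c₁ + c₂ + c₁ ^ 2 * c₂) ^ 2 * ‖b‖ ^ 2 := fun x y =>
    (hmin x).suppCard_sub_le hα (hmin y) (h1 x) (h1 y) |>.trans <| by
      have key : 2 * c₁ * ‖b‖ ≤ (c₁ + c₂ + c₁ ^ 2 * c₂) * ‖b‖ := by
        nlinarith [mul_nonneg hc₂.le (norm_nonneg b)]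
      simp only [mul_assoc]
      gcongr 4 / α ^ 2 * ?_
      nlinarith [mul_self_le_mul_self (by positivity) key]
  have hlip : ∀ x y, (1 - γ) * ‖S x - S y‖ ≤ (2 * c₁ * c₂ + 1) * c₃ * ‖b‖ * ‖x - y‖ := fun x y =>
    calc (1 - γ) * ‖S x - S y‖ ≤ ‖F x - F y‖ * (‖b‖ + (‖F x‖ + ‖F y‖) * ‖S y‖) :=
          (hmin x).mul_norm_sub_le hα.le (hmin y) (h4 x _ (hsparse x y)).1
      _ ≤ c₃ * ‖x - y‖ * (‖b‖ + (c₁ + c₁) * (c₂ * ‖b‖)) := by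
          gcongr
          exacts [h3 x y, h1 x, h1 y, hbound y]
      _ = (2 * c₁ * c₂ + 1) * c₃ * ‖b‖ * ‖x - y‖ := by ring
  have hγ₁ : 0 < 1 - γ := by nlinarith [mul_pos (mul_pos hc₁ hc₂) hc₃, norm_nonneg b]
  have hL : (2 * c₁ * c₂ + 1) * c₃ * ‖b‖ / (1 - γ) < 1 := (div_lt_one hγ₁).2 (by linarith)
  have hLip : ∀ x y, ‖S x - S y‖ ≤ (2 * c₁ * c₂ + 1) * c₃ * ‖b‖ / (1 - γ) * ‖x - y‖ := fun x y => by
    rw [div_mul_eq_mul_div, le_div_iff₀ hγ₁]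
    linarith [hlip x y]
  have hK : ContractingWith _ S := ⟨Real.toNNReal_lt_one.2 hL,
    LipschitzWith.of_dist_le' fun x y => by simpa only [dist_eq_norm] using hLip x y⟩
  have hfix : S (hK.fixedPoint S) = hK.fixedPoint S := hK.fixedPoint_isFixedPt
  refine ⟨hbound, hLip, hL, ⟨_, hfix, fun y hy => hK.fixedPoint_unique hy⟩, _, hfix,
    hK.tendsto_iterate_fixedPoint, ?_⟩
  simpa only [hfix] using hS (hK.fixedPoint S)

/-- Theorem 4.3 of the paper: under conditions (i)–(v), the map
`𝒮_α(x) = argmin_y ‖F(x)y − b‖² + α‖y‖₁` is a bounded contraction with Lipschitz constant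
`(2c₁c₂+1)c₃‖b‖/(1−γ) < 1`, hence the fixed-point iteration `x^{(j+1)} = 𝒮_α(x^{(j)})`
converges from any initial point to the unique `x_α` with
`x_α = argmin_y ‖F(x_α)y − b‖² + α‖y‖₁`. -/
theorem soft_thresholding_contraction
    {d n : ℕ}
    (F : EuclideanSpace ℝ (Fin d) → (EuclideanSpace ℝ (Fin d) →L[ℝ] EuclideanSpace ℝ (Fin n)))
    (b : EuclideanSpace ℝ (Fin n)) (α : ℝ) (hα : 0 < α)
    (c₁ c₂ c₃ γ : ℝ) (hc₁ : 0 < c₁) (hc₂ : 0 < c₂) (hc₃ : 0 < c₃) (hγ : 0 < γ)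
    -- 𝒮_α, a choice of minimizer
    (S : EuclideanSpace ℝ (Fin d) → EuclideanSpace ℝ (Fin d))
    (hS : ∀ x y : EuclideanSpace ℝ (Fin d),
      ‖F x (S x) - b‖ ^ 2 + α * l1Norm (S x) ≤ ‖F x y - b‖ ^ 2 + α * l1Norm y)
    -- (i) uniform bound on the operator norms
    (h1 : ∀ x, ‖F x‖ ≤ c₁)
    -- (ii) feasible points with controlled ℓ₁ norm
    (h2 : ∀ x, ∃ z : EuclideanSpace ℝ (Fin d), F x z = b ∧ l1Norm z ≤ c₂ * ‖b‖)
    -- (iii) Lipschitz continuity of F in spectral norm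
    (h3 : ∀ x y, ‖F x - F y‖ ≤ c₃ * ‖x - y‖)
    -- (iv) restricted isometry on sufficiently sparse vectors
    (h4 : ∀ x y : EuclideanSpace ℝ (Fin d),
      (suppCard y : ℝ) ≤ (4 / α ^ 2) * (c₁ + c₂ + c₁ ^ 2 * c₂) ^ 2 * ‖b‖ ^ 2 →
      (1 - γ) * ‖y‖ ^ 2 ≤ ‖F x y‖ ^ 2 ∧ ‖F x y‖ ^ 2 ≤ (1 + γ) * ‖y‖ ^ 2)
    -- (v) smallness condition
    (h5 : γ < 1 - (1 + 2 * c₁ * c₂) * c₃ * ‖b‖) :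
    (∀ x, ‖S x‖ ≤ c₂ * ‖b‖) ∧
    (∀ x y, ‖S x - S y‖ ≤ ((2 * c₁ * c₂ + 1) * c₃ * ‖b‖ / (1 - γ)) * ‖x - y‖) ∧
    (2 * c₁ * c₂ + 1) * c₃ * ‖b‖ / (1 - γ) < 1 ∧
    (∃! xα : EuclideanSpace ℝ (Fin d), S xα = xα) ∧
    (∃ xα : EuclideanSpace ℝ (Fin d), S xα = xα ∧
      (∀ x₀, Tendsto (fun j => S^[j] x₀) atTop (𝓝 xα)) ∧
      (∀ y, ‖F xα xα - b‖ ^ 2 + α * l1Norm xα ≤ ‖F xα y - b‖ ^ 2 + α * l1Norm y)) :=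
  soft_thresholding_contraction_general F b α hα c₁ c₂ c₃ γ hc₁ hc₂ hc₃ S hS h1 h2 h3 h4 h5
end
end
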